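/- arXiv:2112.12305 — 2 statements merged into one kernel-verified Lean document; each statement's English description precedes it below -/
import Mathlib

section
/- Let M, N be monomials and f a nonzero polynomial with leading coefficient 1. Then S(Nf, M) = (lcm(M, N·in(f))/in(f)) · (f − in(f)). Moreover, if gcd(M, in(f)) = 1, then S(Nf, M) is a polynomial multiple of M. -/
/-!
Both terms of `S(Nf, M)` are lifted to the lcm `x^L`, `L = a ⊔ (b + deg f)`, so
`S(Nf, M) = x^(L - deg f) f - x^L = x^(L - deg f) (f - in f)` because `f` is monic.
When `a` and `deg f` have disjoint supports, `a + deg f ≤ L`, i.e. `x^a ∣ x^(L - deg f)`.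
-/

open MvPolynomial

variable {σ k : Type*} [Field k]

/-- The exponent of the leading monomial of `f` with respect to the monomial order `m`. -/
noncomputable def mdeg (m : MonomialOrder σ) (f : MvPolynomial σ k) : σ →₀ ℕ :=
  m.toSyn.symm (f.support.sup fun a => m.toSyn a)

/-- The leading term `in(f)` of `f` with respect to the monomial order `m`. -/
noncomputable def ltm (m : MonomialOrder σ) (f : MvPolynomial σ k) : MvPolynomial σ k :=
  monomial (mdeg m f) (f.coeff (mdeg m f))

/-- The S-resultant `S(f, g) = (lcm(in f, in g)/in f)·f − (lcm(in f, in g)/in g)·g`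
of two polynomials whose leading coefficients are `1`:  the least common multiple of the
two leading monomials has exponent `mdeg f ⊔ mdeg g`. -/
noncomputable def Sres (m : MonomialOrder σ) (f g : MvPolynomial σ k) :
    MvPolynomial σ k :=
  monomial (mdeg m f ⊔ mdeg m g - mdeg m f) (1 : k) * f
    - monomial (mdeg m f ⊔ mdeg m g - mdeg m g) (1 : k) * g

lemma tsub_add_add_left_of_le {α : Type*} [AddCommMonoid α] [PartialOrder α]
    [CanonicallyOrderedAdd α] [Sub α] [OrderedSub α] [AddLeftReflectLE α]
    {b d l : α} (h : b + d ≤ l) : l - (b + d) + b = l - d := by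
  rw [tsub_add_eq_tsub_tsub_swap, tsub_add_cancel_of_le (le_tsub_of_add_le_right h)]

lemma Finsupp.le_sup_tsub_of_disjoint_support {a c d : σ →₀ ℕ}
    (hdisj : Disjoint a.support d.support) (hdc : d ≤ c) : a ≤ a ⊔ c - d := by
  intro i
  have hi : a i = 0 ∨ d i = 0 := by
    by_contra! h
    exact Finset.disjoint_left.mp hdisj (Finsupp.mem_support_iff.mpr h.1)
      (Finsupp.mem_support_iff.mpr h.2)
  have := hdc i
  simp only [Finsupp.coe_tsub, Pi.sub_apply, Finsupp.sup_apply]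
  omega

lemma mdeg_eq_degree (m : MonomialOrder σ) (f : MvPolynomial σ k) :
    mdeg m f = m.degree f := rfl

lemma mdeg_monomial (m : MonomialOrder σ) (a : σ →₀ ℕ) {c : k} (hc : c ≠ 0) :
    mdeg m (monomial a c) = a := by
  classical
  rw [mdeg_eq_degree, m.degree_monomial, if_neg hc]

lemma mdeg_monomial_mul (m : MonomialOrder σ) (b : σ →₀ ℕ) {c : k} (hc : c ≠ 0)
    {f : MvPolynomial σ k} (hf : f ≠ 0) :
    mdeg m (monomial b c * f) = b + mdeg m f := by
  rw [mdeg_eq_degree, mdeg_eq_degree, m.degree_mul (monomial_eq_zero.not.mpr hc) hf,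
    ← mdeg_eq_degree, mdeg_monomial m b hc]

lemma ltm_eq_monomial_one (m : MonomialOrder σ) {f : MvPolynomial σ k}
    (hlc : f.coeff (mdeg m f) = 1) : ltm m f = monomial (mdeg m f) 1 := by
  rw [ltm, hlc]

lemma Sres_monomial_mul_monomial (m : MonomialOrder σ) (a b : σ →₀ ℕ)
    {f : MvPolynomial σ k} (hf : f ≠ 0) :
    Sres m (monomial b (1 : k) * f) (monomial a 1)
      = monomial (a ⊔ (b + mdeg m f) - mdeg m f) 1 * f - monomial (a ⊔ (b + mdeg m f)) 1 := by
  rw [Sres, mdeg_monomial_mul m b one_ne_zero hf, mdeg_monomial m a one_ne_zero, sup_comm,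
    ← mul_assoc, monomial_mul, monomial_mul, one_mul,
    tsub_add_add_left_of_le le_sup_right, tsub_add_cancel_of_le le_sup_left]

/-- Let `M = x^a`, `N = x^b` be monomials and `f` a nonzero polynomial
with leading coefficient 1.  Then `S(Nf, M) = (lcm(M, N·in(f))/in(f)) · (f − in(f))`.
Moreover, if `gcd(M, in(f)) = 1` (i.e. the supports of the exponents are disjoint), then
`S(Nf, M)` is a polynomial multiple of `M`. -/
theorem stmt4 (m : MonomialOrder σ)
    (a b : σ →₀ ℕ) (f : MvPolynomial σ k)
    (hf : f ≠ 0) (hlc : f.coeff (mdeg m f) = 1) :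
    Sres m (monomial b (1 : k) * f) (monomial a (1 : k))
        = monomial (a ⊔ (b + mdeg m f) - mdeg m f) (1 : k) * (f - ltm m f) ∧
      (Disjoint a.support (mdeg m f).support →
        (monomial a (1 : k)) ∣ Sres m (monomial b (1 : k) * f) (monomial a (1 : k))) := by
  have hS : Sres m (monomial b (1 : k) * f) (monomial a (1 : k))
      = monomial (a ⊔ (b + mdeg m f) - mdeg m f) (1 : k) * (f - ltm m f) := by
    rw [Sres_monomial_mul_monomial m a b hf, ltm_eq_monomial_one m hlc, mul_sub, monomial_mul,
      one_mul, tsub_add_cancel_of_le (le_sup_of_le_right le_add_self)]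
  refine ⟨hS, fun hdisj => hS ▸ dvd_mul_of_dvd_left ?_ _⟩
  exact monomial_one_dvd_monomial_one.mpr
    (Finsupp.le_sup_tsub_of_disjoint_support hdisj le_add_self)
end

section
/- Let I be a proper monomial ideal in R and let b_0, b_1 be distinct variables satisfying condition (⋆) with respect to I. Suppose that there do not exist variables c and d (not necessarily distinct) such that all three of b_1c, b_1d and cd divide elements of G(I). Then f = b_0 + b_1 is regular on R/I². -/
open MvPolynomial

variable {σ k : Type*} [Field k]

/-- `I` is a monomial ideal if it is generated by monomials. -/
def IsMonomialIdeal (I : Ideal (MvPolynomial σ k)) : Prop :=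
  ∃ S : Set (σ →₀ ℕ),
    I = Ideal.span ((fun a => (monomial a (1 : k) : MvPolynomial σ k)) '' S)

/-- The exponents of the minimal monomial generators `G(I)` of a monomial ideal `I`:
the monomials in `I` that are minimal with respect to divisibility
(`x^b ∣ x^a ↔ b ≤ a`). -/
def minimalGens (I : Ideal (MvPolynomial σ k)) : Set (σ →₀ ℕ) :=
  {a | (monomial a (1 : k) : MvPolynomial σ k) ∈ I ∧
    ∀ b : σ →₀ ℕ, (monomial b (1 : k) : MvPolynomial σ k) ∈ I → b ≤ a → b = a}

/-!
A monomial ideal `J` contains a polynomial iff it contains each of its monomials.  Suppose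
`(b₀ + b₁) g ∈ J` while some monomial `u` of `g` is not in `J`.  Among the monomials
`u (b₀/b₁)ⁿ` of `g` outside `J`, the one `p` with the largest `b₀`-exponent has `b₀ p ∈ J`:
otherwise the coefficient `g_p + g_{p b₀/b₁}` of `(b₀ + b₁) g` at `b₀ p` vanishes, producing a
larger one.  Symmetrically some such monomial `q = p (b₁/b₀)ⁿ` has `b₁ q ∈ J`.

For `J = I²` write `a₁ a₂ ∣ b₁ q` and `e₁ e₂ ∣ b₀ p` with `aᵢ, eᵢ ∈ G(I)` and `b₀ ∣ e₁`.  By (⋆)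
also `b₁ ∣ e₁`, and since the `aᵢ` are squarefree in `b₁` this forces `n = 0`, i.e. `p = q`.
As neither `a₁ e₂` nor `a₂ e₂` divides `p`, while `a₁ a₂ ∣ b₁ p` and `b₁ e₂ ∣ p`, there are
variables `c, d` with `b₁c ∣ a₁`, `b₁d ∣ a₂` and `cd ∣ e₂`.
-/

namespace Finsupp

variable {ι : Type*}

lemma single_add_single_le {x y : ι} {v : ι →₀ ℕ} (hxy : x ≠ y) (hx : 1 ≤ v x) (hy : 1 ≤ v y) :
    single x 1 + single y 1 ≤ v := by
  classical
  intro z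
  simp only [coe_add, Pi.add_apply, single_apply]
  grind

lemma apply_eq_add_one_of_le_add_single {u v : ι →₀ ℕ} {x : ι} (h : u ≤ v + single x 1)
    (h' : ¬ u ≤ v) : u x = v x + 1 := by
  classical
  obtain ⟨y, hy⟩ := not_forall.mp h'
  have hx := h x
  have hy' := h y
  simp only [coe_add, Pi.add_apply, single_apply] at hx hy'
  split_ifs at hx hy' with hxy <;> subst_vars <;> omega

lemma exists_single_le_of_not_add_le {α α' γ μ : ι →₀ ℕ} (h : α + α' ≤ μ) (hγ : γ ≤ μ)
    (hα : ¬ α + γ ≤ μ) (hα' : ¬ α' + γ ≤ μ) :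
    ∃ w w', single w 1 ≤ α ∧ single w' 1 ≤ α' ∧ single w 1 + single w' 1 ≤ γ := by
  classical
  obtain ⟨w, hw⟩ := not_forall.mp hα
  obtain ⟨w', hw'⟩ := not_forall.mp hα'
  have hw₁ := h w
  have hw₂ := h w'
  have hγ₁ := hγ w
  have hγ₂ := hγ w'
  simp only [coe_add, Pi.add_apply] at hw hw' hw₁ hw₂
  refine ⟨w, w', single_le_iff.mpr (by omega), single_le_iff.mpr (by omega), fun z => ?_⟩
  have hγz := hγ z
  simp only [coe_add, Pi.add_apply, single_apply]
  split_ifs <;> subst_vars <;> omega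

lemma exists_single_add_single_le_of_not_add_le {a a' c m : ι →₀ ℕ} {x : ι}
    (ha : single x 1 ≤ a) (ha' : single x 1 ≤ a') (haa' : a + a' ≤ m + single x 1)
    (hc : single x 1 + c ≤ m) (hac : ¬ a + c ≤ m) (ha'c : ¬ a' + c ≤ m) :
    ∃ w w', single x 1 + single w 1 ≤ a ∧ single x 1 + single w' 1 ≤ a' ∧
      single w 1 + single w' 1 ≤ c := by
  obtain ⟨α, rfl⟩ := exists_add_of_le ha
  obtain ⟨α', rfl⟩ := exists_add_of_le ha'
  obtain ⟨μ, rfl⟩ := exists_add_of_le (le_self_add.trans hc)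
  have hαα' : single x 1 + single x 1 + (α + α') ≤ single x 1 + single x 1 + μ := by
    convert haa' using 1 <;> abel
  obtain ⟨w, w', hw, hw', hww'⟩ := exists_single_le_of_not_add_le (γ := c)
    (le_of_add_le_add_left hαα') (le_of_add_le_add_left hc)
    (fun h => hac (by rw [add_assoc]; exact add_le_add_right h _))
    (fun h => ha'c (by rw [add_assoc]; exact add_le_add_right h _))
  exact ⟨w, w', add_le_add_right hw _, add_le_add_right hw' _, hww'⟩

end Finsupp

section MonomialIdeal

variable {J : Ideal (MvPolynomial σ k)}

lemma monomial_mem_of_le {u v : σ →₀ ℕ} (hu : monomial u (1 : k) ∈ J) (huv : u ≤ v) :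
    monomial v (1 : k) ∈ J := by
  obtain ⟨w, rfl⟩ := exists_add_of_le huv
  simpa only [monomial_mul, one_mul] using J.mul_mem_right (monomial w (1 : k)) hu

lemma monomial_mem_span_monomial_image_iff {S : Set (σ →₀ ℕ)} {u : σ →₀ ℕ} :
    monomial u (1 : k) ∈ Ideal.span ((fun a => monomial a (1 : k)) '' S) ↔ ∃ a ∈ S, a ≤ u := by
  classical
  simp [mem_ideal_span_monomial_image, support_monomial]

lemma span_monomial_image_mul (S T : Set (σ →₀ ℕ)) :
    Ideal.span ((fun a => monomial a (1 : k)) '' S) *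
        Ideal.span ((fun a => monomial a (1 : k)) '' T) =
      Ideal.span ((fun a => monomial a (1 : k)) '' Set.image2 (· + ·) S T) := by
  rw [Ideal.span_mul_span', ← Set.image2_mul, Set.image_image2, Set.image2_image_left,
    Set.image2_image_right]
  congr 1
  exact Set.image2_congr fun a _ b _ => by rw [monomial_mul, one_mul]

lemma IsMonomialIdeal.mem_iff (hJ : IsMonomialIdeal J) {f : MvPolynomial σ k} :
    f ∈ J ↔ ∀ u ∈ f.support, monomial u (1 : k) ∈ J := by
  obtain ⟨S, rfl⟩ := hJ
  rw [mem_ideal_span_monomial_image]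
  simp only [monomial_mem_span_monomial_image_iff]

lemma IsMonomialIdeal.mul {I : Ideal (MvPolynomial σ k)} (hI : IsMonomialIdeal I)
    (hJ : IsMonomialIdeal J) : IsMonomialIdeal (I * J) := by
  obtain ⟨S, rfl⟩ := hI
  obtain ⟨T, rfl⟩ := hJ
  exact ⟨_, span_monomial_image_mul S T⟩

lemma exists_mem_minimalGens_le {u : σ →₀ ℕ} (hu : monomial u (1 : k) ∈ J) :
    ∃ a ∈ minimalGens J, a ≤ u := by
  obtain ⟨a, ⟨haJ, hau⟩, hmin⟩ := wellFounded_lt.has_min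
    {b | monomial b (1 : k) ∈ J ∧ b ≤ u} ⟨u, hu, le_rfl⟩
  exact ⟨a, ⟨haJ, fun b hbJ hba =>
    of_not_not fun hne => hmin b ⟨hbJ, hba.trans hau⟩ (lt_of_le_of_ne hba hne)⟩, hau⟩

lemma IsMonomialIdeal.monomial_mem_sq_iff (hJ : IsMonomialIdeal J) {u : σ →₀ ℕ} :
    monomial u (1 : k) ∈ J ^ 2 ↔
      ∃ a ∈ minimalGens J, ∃ a' ∈ minimalGens J, a + a' ≤ u := by
  obtain ⟨S, rfl⟩ := hJ
  constructor
  · rw [sq, span_monomial_image_mul, monomial_mem_span_monomial_image_iff]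
    rintro ⟨_, ⟨s, hs, s', hs', rfl⟩, hu⟩
    have hS : ∀ t ∈ S, monomial t (1 : k) ∈ Ideal.span ((fun a => monomial a (1 : k)) '' S) :=
      fun t ht => Ideal.subset_span ⟨t, ht, rfl⟩
    obtain ⟨a, ha, has⟩ := exists_mem_minimalGens_le (hS s hs)
    obtain ⟨a', ha', has'⟩ := exists_mem_minimalGens_le (hS s' hs')
    exact ⟨a, ha, a', ha', (add_le_add has has').trans hu⟩
  · rintro ⟨a, ha, a', ha', hu⟩
    refine monomial_mem_of_le ?_ hu
    simpa only [sq, monomial_mul, one_mul] using Ideal.mul_mem_mul ha.1 ha'.1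

end MonomialIdeal

section Regularity

variable {J : Ideal (MvPolynomial σ k)} {i j : σ}

lemma IsMonomialIdeal.exists_monomial_add_single_mem (hJ : IsMonomialIdeal J) (hij : i ≠ j)
    {g : MvPolynomial σ k} (hg : (X i + X j) * g ∈ J) {u : σ →₀ ℕ} (hu : u ∈ g.support)
    (huJ : monomial u (1 : k) ∉ J) :
    ∃ p n, p + Finsupp.single j n = u + Finsupp.single i n ∧ monomial p (1 : k) ∉ J ∧
      monomial (p + Finsupp.single i 1) (1 : k) ∈ J := by
  classical
  let F := g.support.filter fun p => monomial p (1 : k) ∉ J ∧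
    ∃ n, p + Finsupp.single j n = u + Finsupp.single i n
  obtain ⟨p, hpF, hmax⟩ := F.exists_max_image (· i) ⟨u, Finset.mem_filter.mpr ⟨hu, huJ, 0, by simp⟩⟩
  simp only [F, Finset.mem_filter, mem_support_iff] at hpF hmax
  obtain ⟨hp, hpJ, n, hpn⟩ := hpF
  refine ⟨p, n, hpn, hpJ, of_not_not fun hpiJ => ?_⟩
  have hcoeff : coeff (p + Finsupp.single i 1) ((X i + X j) * g) = 0 :=
    not_ne_iff.mp fun h => hpiJ (hJ.mem_iff.mp hg _ (mem_support_iff.mpr h))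
  rw [add_mul, coeff_add, mul_comm (X i), mul_comm (X j), coeff_mul_X, coeff_mul_X'] at hcoeff
  split_ifs at hcoeff with hj
  · set w := p + Finsupp.single i 1 - Finsupp.single j 1
    have hw : w + Finsupp.single j 1 = p + Finsupp.single i 1 :=
      tsub_add_cancel_of_le (Finsupp.single_le_iff.mpr (Nat.one_le_iff_ne_zero.mpr
        (Finsupp.mem_support_iff.mp hj)))
    have hwi : w i = p i + 1 := by
      simpa [Finsupp.single_apply, hij, Ne.symm hij] using DFunLike.congr_fun hw i
    have := hmax w ⟨fun hw0 => hp (by simpa [hw0] using hcoeff),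
      fun hwJ => hpiJ (hw ▸ monomial_mem_of_le hwJ le_self_add),
      n + 1, by rw [Finsupp.single_add, ← add_assoc, add_right_comm, hw, add_right_comm, hpn,
        add_assoc, ← Finsupp.single_add]⟩
    omega
  · exact hp (by simpa using hcoeff)

theorem IsMonomialIdeal.isSMulRegular_X_add_X (hJ : IsMonomialIdeal J) (hij : i ≠ j)
    (h : ∀ p q n, p + Finsupp.single j n = q + Finsupp.single i n →
      monomial p (1 : k) ∉ J → monomial q (1 : k) ∉ J →
      monomial (p + Finsupp.single i 1) (1 : k) ∈ J →
      monomial (q + Finsupp.single j 1) (1 : k) ∈ J → False) :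
    IsSMulRegular (MvPolynomial σ k ⧸ J) (X i + X j : MvPolynomial σ k) := by
  refine (isSMulRegular_quotient_iff_mem_of_smul_mem J _).mpr fun g hg => ?_
  refine hJ.mem_iff.mpr fun u hu => of_not_not fun huJ => ?_
  obtain ⟨p, n, hpn, hpJ, hpiJ⟩ := hJ.exists_monomial_add_single_mem hij hg hu huJ
  obtain ⟨q, m, hqm, hqJ, hqjJ⟩ :=
    hJ.exists_monomial_add_single_mem hij.symm (by rwa [add_comm (X j), ← smul_eq_mul]) hu huJ
  refine h p q (n + m) ?_ hpJ hqJ hpiJ hqjJ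
  rw [Finsupp.single_add, ← add_assoc, hpn, add_right_comm, ← hqm, add_assoc,
    add_comm (Finsupp.single i m), ← Finsupp.single_add]

end Regularity

section StarCondition

variable {I : Ideal (MvPolynomial σ k)}

lemma IsMonomialIdeal.exists_minimalGens_of_monomial_add_single_mem_sq (hI : IsMonomialIdeal I)
    {m : σ →₀ ℕ} {x : σ} (hm : monomial m (1 : k) ∉ I ^ 2)
    (hmx : monomial (m + Finsupp.single x 1) (1 : k) ∈ I ^ 2) :
    ∃ a ∈ minimalGens I, ∃ a' ∈ minimalGens I,
      a + a' ≤ m + Finsupp.single x 1 ∧ 1 ≤ a x ∧ a x + a' x = m x + 1 := by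
  obtain ⟨a, ha, a', ha', hle⟩ := hI.monomial_mem_sq_iff.mp hmx
  have hx := Finsupp.apply_eq_add_one_of_le_add_single hle
    fun h => hm (hI.monomial_mem_sq_iff.mpr ⟨a, ha, a', ha', h⟩)
  rw [Finsupp.add_apply] at hx
  rcases Nat.eq_zero_or_pos (a x) with hax | hax
  · exact ⟨a', ha', a, ha, add_comm a a' ▸ hle, by omega, by omega⟩
  · exact ⟨a, ha, a', ha', hle, hax, hx⟩

lemma IsMonomialIdeal.monomial_add_single_notMem_sq (hI : IsMonomialIdeal I) {b0 b1 : σ}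
    (hb : b0 ≠ b1)
    (hstar1 : ∀ a ∈ minimalGens I, a b1 ≤ 1)
    (hstar2 : ∀ a ∈ minimalGens I, 1 ≤ a b0 → 1 ≤ a b1)
    (hcd : ¬ ∃ c d : σ,
      (∃ a ∈ minimalGens I, Finsupp.single b1 1 + Finsupp.single c 1 ≤ a) ∧
      (∃ a ∈ minimalGens I, Finsupp.single b1 1 + Finsupp.single d 1 ≤ a) ∧
      (∃ a ∈ minimalGens I, Finsupp.single c 1 + Finsupp.single d 1 ≤ a))
    {p q : σ →₀ ℕ} {n : ℕ} (hpq : p + Finsupp.single b1 n = q + Finsupp.single b0 n)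
    (hp : monomial p (1 : k) ∉ I ^ 2) (hq : monomial q (1 : k) ∉ I ^ 2)
    (hp0 : monomial (p + Finsupp.single b0 1) (1 : k) ∈ I ^ 2) :
    monomial (q + Finsupp.single b1 1) (1 : k) ∉ I ^ 2 := by
  intro hq1
  obtain ⟨a, ha, a', ha', haa', -, hsum⟩ :=
    hI.exists_minimalGens_of_monomial_add_single_mem_sq hq hq1
  obtain ⟨c, hc, c', hc', hcc', hc0, -⟩ :=
    hI.exists_minimalGens_of_monomial_add_single_mem_sq hp hp0
  have hb0b1 : Finsupp.single b0 1 + Finsupp.single b1 1 ≤ c :=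
    Finsupp.single_add_single_le hb hc0 (hstar2 c hc hc0)
  have hc'p : Finsupp.single b1 1 + c' ≤ p := by
    refine le_of_add_le_add_left (a := Finsupp.single b0 1) ?_
    calc Finsupp.single b0 1 + (Finsupp.single b1 1 + c')
        _ = Finsupp.single b0 1 + Finsupp.single b1 1 + c' := (add_assoc _ _ _).symm
        _ ≤ c + c' := add_le_add_left hb0b1 _
        _ ≤ p + Finsupp.single b0 1 := hcc'
        _ = Finsupp.single b0 1 + p := add_comm _ _
  have hpb1 := hc'p b1
  have hqb1 := DFunLike.congr_fun hpq b1
  simp only [Finsupp.coe_add, Pi.add_apply, Finsupp.single_eq_same,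
    Finsupp.single_eq_of_ne' hb] at hpb1 hqb1
  have ha1 := hstar1 a ha
  have ha'1 := hstar1 a' ha'
  obtain rfl : n = 0 := by omega
  obtain rfl : p = q := by simpa using hpq
  obtain ⟨w, w', hw, hw', hww'⟩ := Finsupp.exists_single_add_single_le_of_not_add_le
    (Finsupp.single_le_iff.mpr (by omega)) (Finsupp.single_le_iff.mpr (by omega)) haa' hc'p
    (fun h => hp (hI.monomial_mem_sq_iff.mpr ⟨a, ha, c', hc', h⟩))
    (fun h => hp (hI.monomial_mem_sq_iff.mpr ⟨a', ha', c', hc', h⟩))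
  exact hcd ⟨w, w', ⟨a, ha, hw⟩, ⟨a', ha', hw'⟩, ⟨c', hc', hww'⟩⟩

end StarCondition

theorem stmt8_general
    (I : Ideal (MvPolynomial σ k)) (hI : IsMonomialIdeal I)
    (b0 b1 : σ) (hb : b0 ≠ b1)
    (hstar1 : ∀ a ∈ minimalGens I, a b0 ≤ 1 ∧ a b1 ≤ 1)
    (hstar2 : ∀ a ∈ minimalGens I, 1 ≤ a b0 → 1 ≤ a b1)
    (hcd : ¬ ∃ c d : σ,
      (∃ a ∈ minimalGens I, Finsupp.single b1 1 + Finsupp.single c 1 ≤ a) ∧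
      (∃ a ∈ minimalGens I, Finsupp.single b1 1 + Finsupp.single d 1 ≤ a) ∧
      (∃ a ∈ minimalGens I, Finsupp.single c 1 + Finsupp.single d 1 ≤ a)) :
    IsSMulRegular ((MvPolynomial σ k) ⧸ (I ^ 2)) (X b0 + X b1 : MvPolynomial σ k) := by
  have hI2 : IsMonomialIdeal (I ^ 2) := sq I ▸ hI.mul hI
  exact hI2.isSMulRegular_X_add_X hb fun _ _ _ hpq hp hq hp0 =>
    hI.monomial_add_single_notMem_sq hb (fun a ha => (hstar1 a ha).2) hstar2 hcd hpq hp hq hp0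

/-- Let `I` be a proper monomial ideal and `b₀, b₁` distinct variables
satisfying condition (⋆).  Suppose there do not exist variables `c, d` (not necessarily
distinct) such that `b₁c`, `b₁d` and `cd` all divide elements of `G(I)`.  Then
`f = b₀ + b₁` is regular on `R/I²`. -/
theorem stmt8 [Fintype σ]
    (I : Ideal (MvPolynomial σ k)) (hI : IsMonomialIdeal I) (hproper : I ≠ ⊤)
    (b0 b1 : σ) (hb : b0 ≠ b1)
    (hstar1 : ∀ a ∈ minimalGens I, a b0 ≤ 1 ∧ a b1 ≤ 1)
    (hstar2 : ∀ a ∈ minimalGens I, 1 ≤ a b0 → 1 ≤ a b1)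
    (hcd : ¬ ∃ c d : σ,
      (∃ a ∈ minimalGens I, Finsupp.single b1 1 + Finsupp.single c 1 ≤ a) ∧
      (∃ a ∈ minimalGens I, Finsupp.single b1 1 + Finsupp.single d 1 ≤ a) ∧
      (∃ a ∈ minimalGens I, Finsupp.single c 1 + Finsupp.single d 1 ≤ a)) :
    IsSMulRegular ((MvPolynomial σ k) ⧸ (I ^ 2)) (X b0 + X b1 : MvPolynomial σ k) :=
  stmt8_general I hI b0 b1 hb hstar1 hstar2 hcd
end
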